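/- Let α be a type with decidable equality, let l₁ and l₂ be lists over α such that l₁ has no duplicate entries and l₂ is a permutation of l₁, and let s be a contiguous segment (infix) of l₁. Then the list s ++ l₂.filter (fun x => x ∉ s) is a permutation of l₁; in particular the order-crossover offspring contains every job of the parents exactly once. -/

import Mathlib

theorem order_crossover_perm {α : Type*} [DecidableEq α] (l₁ l₂ s : List α)
    (h1 : l₁.Nodup) (h2 : List.Perm l₂ l₁) (hs : s <:+: l₁) :
    List.Perm (s ++ l₂.filter (fun x => x ∉ s)) l₁ := by
  obtain ⟨t, u, rfl⟩ := hs
  have hf : List.Perm (l₂.filter (fun x => x ∉ s))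
      ((t ++ s ++ u).filter (fun x => x ∉ s)) := h2.filter _
  have hnd := h1
  simp only [List.nodup_append] at hnd
  have ht : t.filter (fun x => x ∉ s) = t := by
    apply List.filter_eq_self.2
    intro a ha
    simp only [decide_eq_true_eq]
    intro hmem
    exact hnd.1.2.2 a ha a hmem rfl
  have hu : u.filter (fun x => x ∉ s) = u := by
    apply List.filter_eq_self.2
    intro a ha
    simp only [decide_eq_true_eq]
    intro hmem
    exact hnd.2.2 a (List.mem_append_right _ hmem) a ha rfl
  have hss : s.filter (fun x => x ∉ s) = [] := by
    apply List.filter_eq_nil_iff.2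
    intro a ha
    simp [ha]
  refine (hf.append_left s).trans ?_
  have heq : s ++ (t ++ s ++ u).filter (fun x => x ∉ s) = s ++ (t ++ u) := by
    simp only [List.filter_append, ht, hu, hss, List.append_nil]
  rw [heq, ← List.append_assoc]
  exact List.perm_append_comm.append_right u
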